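/- arXiv:2006.13361 — 2 statements merged into one kernel-verified Lean document; each statement's English description precedes it below -/
import Mathlib

section
/- Let (Ω, K, P) be a probability space, A, B sub-σ-algebras, and ψ' = ψ'(A,B) ∈ (0,1]. Then for any mean-zero simple random variables X measurable with respect to A and Y measurable with respect to B, |E(XY)| ≤ (1 - ψ') ‖X‖₂ ‖Y‖₂. -/
/-!
Write `X = ∑ a 1_{X = a}`, `Y = ∑ b 1_{Y = b}` and let `p a b = P(X = a, Y = b)`. The definition
of `ψ'` gives `p ≥ ψ' (p_X ⊗ p_Y)`, so `S = p - ψ' (p_X ⊗ p_Y)` is a nonnegative weight on pairs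
of values with marginals `(1 - ψ') p_X` and `(1 - ψ') p_Y`. As `E X = 0`, the product part
contributes nothing to `E(XY) = ∑ a b p a b`, hence `E(XY) = ∑ a b S a b`, and Cauchy–Schwarz
for the weight `S` bounds this by `√((1 - ψ') E X²) √((1 - ψ') E Y²)`.
-/

open MeasureTheory Finset

section WeightedCauchySchwarz

variable {α β : Type*} {s : Finset α} {t : Finset β}

theorem abs_sum_sum_mul_le_sqrt_mul_sqrt {S : α → β → ℝ}
    (hS : ∀ a ∈ s, ∀ b ∈ t, 0 ≤ S a b) (f : α → ℝ) (g : β → ℝ) :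
    |∑ a ∈ s, ∑ b ∈ t, S a b * (f a * g b)| ≤
      √(∑ a ∈ s, (∑ b ∈ t, S a b) * f a ^ 2) *
        √(∑ b ∈ t, (∑ a ∈ s, S a b) * g b ^ 2) := by
  have hS' : ∀ x ∈ s ×ˢ t, 0 ≤ S x.1 x.2 := fun x hx =>
    hS _ (mem_product.1 hx).1 _ (mem_product.1 hx).2
  have key := sum_sq_le_sum_mul_sum_of_sq_le_mul (s ×ˢ t)
    (r := fun x => S x.1 x.2 * (f x.1 * g x.2))
    (f := fun x => S x.1 x.2 * f x.1 ^ 2) (g := fun x => S x.1 x.2 * g x.2 ^ 2)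
    (fun x hx => mul_nonneg (hS' x hx) (sq_nonneg _))
    (fun x hx => mul_nonneg (hS' x hx) (sq_nonneg _)) (fun x _ => (by ring : _ = _).le)
  rw [sum_product, sum_product, sum_product_right] at key
  simp only [← sum_mul] at key
  rw [← Real.sqrt_mul (sum_nonneg fun a ha => mul_nonneg (sum_nonneg (hS a ha)) (sq_nonneg _))]
  exact Real.abs_le_sqrt key

theorem abs_sum_sum_mul_le_of_mul_marginals_le {p : α → β → ℝ} {u : α → ℝ} {v : β → ℝ}
    {c : ℝ} (hp : ∀ a ∈ s, ∀ b ∈ t, c * (u a * v b) ≤ p a b)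
    (hu : ∀ a ∈ s, ∑ b ∈ t, p a b = u a) (hv : ∀ b ∈ t, ∑ a ∈ s, p a b = v b)
    (hp1 : ∑ a ∈ s, ∑ b ∈ t, p a b = 1) {f : α → ℝ} (g : β → ℝ)
    (hf : ∑ a ∈ s, u a * f a = 0) :
    |∑ a ∈ s, ∑ b ∈ t, p a b * (f a * g b)| ≤
      (1 - c) * √(∑ a ∈ s, u a * f a ^ 2) * √(∑ b ∈ t, v b * g b ^ 2) := by
  have hu1 : ∑ a ∈ s, u a = 1 := by rw [← sum_congr rfl hu, hp1]
  have hv1 : ∑ b ∈ t, v b = 1 := by rw [← sum_congr rfl hv, sum_comm, hp1]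
  set S : α → β → ℝ := fun a b => p a b - c * (u a * v b)
  have hS : ∀ a ∈ s, ∀ b ∈ t, 0 ≤ S a b := fun a ha b hb => sub_nonneg.2 (hp a ha b hb)
  have hrow : ∀ a ∈ s, ∑ b ∈ t, S a b = (1 - c) * u a := fun a ha => by
    simp only [S, sum_sub_distrib, hu a ha, ← mul_sum, hv1]; ring
  have hcol : ∀ b ∈ t, ∑ a ∈ s, S a b = (1 - c) * v b := fun b hb => by
    simp only [S, sum_sub_distrib, hv b hb, ← sum_mul, ← mul_sum, hu1]; ring
  have hc : 0 ≤ 1 - c := by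
    have := sum_nonneg fun a ha => sum_nonneg (hS a ha)
    rwa [sum_congr rfl hrow, ← mul_sum, hu1, mul_one] at this
  have hcov : ∑ a ∈ s, ∑ b ∈ t, p a b * (f a * g b)
      = ∑ a ∈ s, ∑ b ∈ t, S a b * (f a * g b) := by
    have hprod : ∑ a ∈ s, ∑ b ∈ t, c * (u a * v b) * (f a * g b)
        = c * (∑ a ∈ s, u a * f a) * ∑ b ∈ t, v b * g b := by
      rw [mul_assoc, sum_mul_sum, mul_sum]
      refine sum_congr rfl fun a _ => ?_
      rw [mul_sum]
      exact sum_congr rfl fun b _ => by ring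
    simp only [S, sub_mul, sum_sub_distrib, hprod, hf]
    ring
  calc |∑ a ∈ s, ∑ b ∈ t, p a b * (f a * g b)|
      ≤ √(∑ a ∈ s, (∑ b ∈ t, S a b) * f a ^ 2) *
          √(∑ b ∈ t, (∑ a ∈ s, S a b) * g b ^ 2) :=
        hcov ▸ abs_sum_sum_mul_le_sqrt_mul_sqrt hS f g
    _ = √(∑ a ∈ s, (1 - c) * u a * f a ^ 2) * √(∑ b ∈ t, (1 - c) * v b * g b ^ 2) := by
        rw [sum_congr rfl fun a ha => congrArg (· * f a ^ 2) (hrow a ha),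
          sum_congr rfl fun b hb => congrArg (· * g b ^ 2) (hcol b hb)]
    _ = √((1 - c) * ∑ a ∈ s, u a * f a ^ 2) * √((1 - c) * ∑ b ∈ t, v b * g b ^ 2) := by
        simp only [mul_assoc, ← mul_sum]
    _ = (1 - c) * √(∑ a ∈ s, u a * f a ^ 2) * √(∑ b ∈ t, v b * g b ^ 2) := by
        rw [Real.sqrt_mul hc, Real.sqrt_mul hc]
        linear_combination (√(∑ a ∈ s, u a * f a ^ 2) * √(∑ b ∈ t, v b * g b ^ 2)) *
          Real.mul_self_sqrt hc

end WeightedCauchySchwarz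

namespace MeasureTheory

theorem MemLp.toReal_eLpNorm_two_eq_sqrt_integral_sq {Ω : Type*} {m : MeasurableSpace Ω}
    {μ : Measure Ω} {f : Ω → ℝ} (hf : MemLp f 2 μ) :
    (eLpNorm f 2 μ).toReal = √(∫ ω, f ω ^ 2 ∂μ) := by
  rw [hf.eLpNorm_eq_integral_rpow_norm two_ne_zero ENNReal.ofNat_ne_top,
    ENNReal.toReal_ofReal (by positivity), Real.sqrt_eq_rpow, one_div]
  simp

namespace SimpleFunc

variable {Ω : Type*} {m : MeasurableSpace Ω} (P : Measure Ω)

theorem integral_comp_eq_sum_of_subset [IsFiniteMeasure P] {E : Type*} [NormedAddCommGroup E]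
    (f : SimpleFunc Ω E) {g : E → ℝ} (hg : g 0 = 0) {s : Finset E} (hs : f.range ⊆ s) :
    ∫ ω, g (f ω) ∂P = ∑ x ∈ s, P.real (f ⁻¹' {x}) * g x := by
  change ∫ ω, f.map g ω ∂P = _
  rw [← integral_eq_integral _ (integrable_of_isFiniteMeasure _),
    map_integral f g (integrable_of_isFiniteMeasure f) hg]
  refine Finset.sum_subset hs fun x _ hx => ?_
  rw [(preimage_eq_empty_iff f x).2 hx, measureReal_empty, zero_smul]

theorem integral_comp_eq_sum [IsFiniteMeasure P] {E : Type*} [NormedAddCommGroup E]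
    (f : SimpleFunc Ω E) {g : E → ℝ} (hg : g 0 = 0) :
    ∫ ω, g (f ω) ∂P = ∑ x ∈ f.range, P.real (f ⁻¹' {x}) * g x :=
  integral_comp_eq_sum_of_subset P f hg subset_rfl

theorem integral_mul_eq_sum [IsFiniteMeasure P] (X Y : SimpleFunc Ω ℝ) :
    ∫ ω, X ω * Y ω ∂P =
      ∑ a ∈ X.range, ∑ b ∈ Y.range, P.real (X ⁻¹' {a} ∩ Y ⁻¹' {b}) * (a * b) := by
  have hrange : (pair X Y).range ⊆ X.range ×ˢ Y.range := by
    intro x hx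
    obtain ⟨ω, rfl⟩ := mem_range.1 hx
    exact Finset.mem_product.2 ⟨mem_range_self X ω, mem_range_self Y ω⟩
  rw [← Finset.sum_product' (f := fun a b => P.real (X ⁻¹' {a} ∩ Y ⁻¹' {b}) * (a * b))]
  refine (integral_comp_eq_sum_of_subset P (pair X Y) (g := fun x : ℝ × ℝ => x.1 * x.2)
    (mul_zero _) hrange).trans (Finset.sum_congr rfl fun x _ => ?_)
  rw [← pair_preimage_singleton]

theorem toReal_eLpNorm_two_eq_sqrt_sum [IsFiniteMeasure P] (X : SimpleFunc Ω ℝ) :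
    (eLpNorm X 2 P).toReal = √(∑ a ∈ X.range, P.real (X ⁻¹' {a}) * a ^ 2) := by
  rw [(X.memLp_of_isFiniteMeasure 2 P).toReal_eLpNorm_two_eq_sqrt_integral_sq,
    integral_comp_eq_sum P X (g := (· ^ 2)) (zero_pow two_ne_zero)]

theorem sum_measureReal_inter_preimage_singleton [IsFiniteMeasure P] {β : Type*}
    (Y : SimpleFunc Ω β) (A : Set Ω) :
    ∑ b ∈ Y.range, P.real (A ∩ Y ⁻¹' {b}) = P.real A := by
  simp_rw [Set.inter_comm A, ← measureReal_restrict_apply (Y.measurableSet_fiber _)]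
  rw [sum_measureReal_preimage_singleton _ fun b _ => Y.measurableSet_fiber b, coe_range,
    Set.preimage_range, measureReal_restrict_apply_univ]

theorem abs_integral_mul_le_of_mul_le_measureReal_inter [IsProbabilityMeasure P]
    (X Y : SimpleFunc Ω ℝ) {c : ℝ}
    (hc : ∀ a b, c * (P.real (X ⁻¹' {a}) * P.real (Y ⁻¹' {b})) ≤
      P.real (X ⁻¹' {a} ∩ Y ⁻¹' {b}))
    (hX : ∫ ω, X ω ∂P = 0) :
    |∫ ω, X ω * Y ω ∂P| ≤ (1 - c) * (eLpNorm X 2 P).toReal * (eLpNorm Y 2 P).toReal := by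
  have hmean : ∑ a ∈ X.range, P.real (X ⁻¹' {a}) * a = 0 :=
    (integral_comp_eq_sum P X (g := fun a => a) rfl).symm.trans hX
  have hrow : ∀ a ∈ X.range,
      ∑ b ∈ Y.range, P.real (X ⁻¹' {a} ∩ Y ⁻¹' {b}) = P.real (X ⁻¹' {a}) :=
    fun a _ => sum_measureReal_inter_preimage_singleton P Y _
  have hcol : ∀ b ∈ Y.range,
      ∑ a ∈ X.range, P.real (X ⁻¹' {a} ∩ Y ⁻¹' {b}) = P.real (Y ⁻¹' {b}) := fun b _ => by
    simp_rw [Set.inter_comm _ (Y ⁻¹' {b})]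
    exact sum_measureReal_inter_preimage_singleton P X _
  have htotal : ∑ a ∈ X.range, ∑ b ∈ Y.range, P.real (X ⁻¹' {a} ∩ Y ⁻¹' {b}) = 1 := by
    rw [Finset.sum_congr rfl hrow]
    simpa using sum_measureReal_inter_preimage_singleton P X Set.univ
  rw [integral_mul_eq_sum, toReal_eLpNorm_two_eq_sqrt_sum, toReal_eLpNorm_two_eq_sqrt_sum]
  exact abs_sum_sum_mul_le_of_mul_marginals_le (fun a _ b _ => hc a b) hrow hcol htotal _ hmean

end SimpleFunc

end MeasureTheory

noncomputable def psiPrime {Ω : Type*} {m : MeasurableSpace Ω} (P : Measure Ω)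
    (𝒜 ℬ : MeasurableSpace Ω) : ℝ :=
  sInf {r : ℝ | ∃ A B : Set Ω, MeasurableSet[𝒜] A ∧ MeasurableSet[ℬ] B ∧
    0 < P.real A * P.real B ∧ r = P.real (A ∩ B) / (P.real A * P.real B)}

theorem psiPrime_mul_le_measureReal_inter {Ω : Type*} {m : MeasurableSpace Ω} (P : Measure Ω)
    {𝒜 ℬ : MeasurableSpace Ω} {A B : Set Ω} (hA : MeasurableSet[𝒜] A)
    (hB : MeasurableSet[ℬ] B) :
    psiPrime P 𝒜 ℬ * (P.real A * P.real B) ≤ P.real (A ∩ B) := by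
  rcases (mul_nonneg measureReal_nonneg measureReal_nonneg).eq_or_lt' with h | h
  · rw [h, mul_zero]
    exact measureReal_nonneg
  · rw [← le_div_iff₀ h]
    refine csInf_le ⟨0, ?_⟩ ⟨A, B, hA, hB, h, rfl⟩
    rintro _ ⟨A, B, -, -, hAB, rfl⟩
    exact div_nonneg measureReal_nonneg hAB.le

theorem abs_integral_mul_le_of_psi_prime_general
    {Ω : Type*} {m : MeasurableSpace Ω} (P : Measure Ω) [IsProbabilityMeasure P]
    (𝒜 ℬ : MeasurableSpace Ω) (h𝒜 : 𝒜 ≤ m) (hℬ : ℬ ≤ m)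
    (ψ' : ℝ)
    (hψdef : ψ' = sInf {r : ℝ | ∃ A B : Set Ω,
        MeasurableSet[𝒜] A ∧ MeasurableSet[ℬ] B ∧
        0 < (P A).toReal * (P B).toReal ∧
        r = (P (A ∩ B)).toReal / ((P A).toReal * (P B).toReal)})
    (X : @SimpleFunc Ω 𝒜 ℝ) (Y : @SimpleFunc Ω ℬ ℝ)
    (hX : ∫ ω, X ω ∂P = 0) :
    |∫ ω, X ω * Y ω ∂P| ≤
      (1 - ψ') * (eLpNorm (fun ω => X ω) 2 P).toReal *
        (eLpNorm (fun ω => Y ω) 2 P).toReal := by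
  obtain rfl : ψ' = psiPrime P 𝒜 ℬ := hψdef
  exact SimpleFunc.abs_integral_mul_le_of_mul_le_measureReal_inter P
    (X.toLargerSpace h𝒜) (Y.toLargerSpace hℬ)
    (fun a b => psiPrime_mul_le_measureReal_inter P (@SimpleFunc.measurableSet_fiber _ _ 𝒜 X a)
      (@SimpleFunc.measurableSet_fiber _ _ ℬ Y b)) hX

/-- If `ψ' = ψ'(𝒜, ℬ) ∈ (0,1]`, then for mean-zero simple random variables `X`
(`𝒜`-measurable) and `Y` (`ℬ`-measurable), `|E(XY)| ≤ (1 - ψ') ‖X‖₂ ‖Y‖₂`. -/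
theorem abs_integral_mul_le_of_psi_prime
    {Ω : Type*} {m : MeasurableSpace Ω} (P : Measure Ω) [IsProbabilityMeasure P]
    (𝒜 ℬ : MeasurableSpace Ω) (h𝒜 : 𝒜 ≤ m) (hℬ : ℬ ≤ m)
    (ψ' : ℝ)
    (hψdef : ψ' = sInf {r : ℝ | ∃ A B : Set Ω,
        MeasurableSet[𝒜] A ∧ MeasurableSet[ℬ] B ∧
        0 < (P A).toReal * (P B).toReal ∧
        r = (P (A ∩ B)).toReal / ((P A).toReal * (P B).toReal)})
    (hψpos : 0 < ψ') (hψle : ψ' ≤ 1)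
    (X : @SimpleFunc Ω 𝒜 ℝ) (Y : @SimpleFunc Ω ℬ ℝ)
    (hX : ∫ ω, X ω ∂P = 0) (hY : ∫ ω, Y ω ∂P = 0) :
    |∫ ω, X ω * Y ω ∂P| ≤
      (1 - ψ') * (eLpNorm (fun ω => X ω) 2 P).toReal *
        (eLpNorm (fun ω => Y ω) 2 P).toReal :=
  abs_integral_mul_le_of_psi_prime_general P 𝒜 ℬ h𝒜 hℬ ψ' hψdef X Y hX
end

section
/- Under the two-sided kernel domination condition a P_k(A) ≤ Q_k(x,A) ≤ b P_k(A) (0 < a ≤ 1 ≤ b) for a Markov chain (ξ_k), define the operators T_k(h)(x) = ∫ h(y) exp(i u g_k(y)) Q_k(x, dy) on bounded complex measurable functions. Then for every k ≥ 2 and u ∈ ℝ, the composition satisfies ‖T_{k-1} ∘ T_k‖² ≤ 1 - (γ/2)(1 - |E(exp(i u X_{k-1}))|²), where γ = a⁴/b, X_{k-1} = g_{k-1}(ξ_{k-1}), and ‖T‖ = sup_{|h|_∞ ≤ 1} |T(h)|_∞ (with the sup-norm taken P_{k-2}-essentially). -/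
/-!
The minorization `a • P_k ≤ Q_k(x, ·)` leaves, after removing `a • P_k`, a positive measure of
mass `1 - a`; hence for `‖G‖ ≤ 1` the integral `∫ G dQ_k(x)` lies within `1 - a` of
`a ∫ G dP_k`. Applied to `T_k`, this says that `T_k h` is, off a null set, within `1 - a` of a
constant `a c` with `‖c‖ ≤ 1`. Integrating against `exp (i u g_{k-1})` and applying the same
estimate to `T_{k-1}` then gives `‖T_{k-1} T_k h‖ ≤ a² |E exp (i u X_{k-1})| + 1 - a²`, and
squaring this bound yields the claim, since `a⁴ / b ≤ a²`.
-/

open MeasureTheory ProbabilityTheory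

section Minorization

variable {α : Type*} [MeasurableSpace α] {μ ν : Measure α} {a : ℝ}

lemma MeasureTheory.Measure.ofReal_smul_le_of_forall_toReal_le [IsFiniteMeasure μ] [IsFiniteMeasure ν]
    (ha : 0 ≤ a) (hdom : ∀ A, MeasurableSet A → a * (ν A).toReal ≤ (μ A).toReal) :
    ENNReal.ofReal a • ν ≤ μ := by
  refine Measure.le_iff.2 fun A hA => ?_
  rw [Measure.smul_apply, smul_eq_mul, ← ENNReal.toReal_le_toReal (by finiteness) (by finiteness),
    ENNReal.toReal_mul, ENNReal.toReal_ofReal ha]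
  exact hdom A hA

lemma norm_integral_sub_mul_integral_le [IsFiniteMeasure μ] [IsFiniteMeasure ν] (ha : 0 ≤ a)
    (hle : ENNReal.ofReal a • ν ≤ μ) {G : α → ℂ} (hG : Measurable G) {C : ℝ}
    (hGC : ∀ z, ‖G z‖ ≤ C) :
    ‖∫ z, G z ∂μ - a * ∫ z, G z ∂ν‖ ≤ C * (μ.real Set.univ - a * ν.real Set.univ) := by
  set ρ := μ - ENNReal.ofReal a • ν
  have : IsFiniteMeasure (ENNReal.ofReal a • ν) := isFiniteMeasure_of_le μ hle
  have hμ : μ = ρ + ENNReal.ofReal a • ν := (Measure.sub_add_cancel_of_le hle).symm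
  have hint : ∀ (m : Measure α) [IsFiniteMeasure m], Integrable G m := fun m _ =>
    .of_bound hG.aestronglyMeasurable C (.of_forall hGC)
  have hρ : ρ.real Set.univ = μ.real Set.univ - a * ν.real Set.univ := by
    rw [hμ, measureReal_add_apply, measureReal_ennreal_smul_apply, ENNReal.toReal_ofReal ha,
      add_sub_cancel_right]
  calc ‖∫ z, G z ∂μ - a * ∫ z, G z ∂ν‖ = ‖∫ z, G z ∂ρ‖ := by
        conv_lhs => rw [hμ]
        rw [integral_add_measure (hint _) (hint _), integral_smul_measure,
          ENNReal.toReal_ofReal ha, Complex.real_smul, add_sub_cancel_right]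
    _ ≤ C * (μ.real Set.univ - a * ν.real Set.univ) := by
        rw [← hρ]
        exact norm_integral_le_of_norm_le_const (.of_forall hGC)

lemma norm_integral_sub_mul_integral_le_one_sub [IsProbabilityMeasure μ] [IsProbabilityMeasure ν]
    (ha : 0 ≤ a) (hdom : ∀ A, MeasurableSet A → a * (ν A).toReal ≤ (μ A).toReal)
    {G : α → ℂ} (hG : Measurable G) (hG1 : ∀ z, ‖G z‖ ≤ 1) :
    ‖∫ z, G z ∂μ - a * ∫ z, G z ∂ν‖ ≤ 1 - a := by
  simpa using norm_integral_sub_mul_integral_le ha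
    (Measure.ofReal_smul_le_of_forall_toReal_le ha hdom) hG hG1

lemma norm_integral_mul_le_of_ae_norm_sub_le [IsProbabilityMeasure μ] {H e : α → ℂ}
    (hHe : Integrable (fun z => H z * e z) μ) (he : Integrable e μ) (he1 : ∀ z, ‖e z‖ ≤ 1)
    {w : ℂ} {r : ℝ} (hHw : ∀ᵐ z ∂μ, ‖H z - w‖ ≤ r) :
    ‖∫ z, H z * e z ∂μ‖ ≤ ‖w‖ * ‖∫ z, e z ∂μ‖ + r := by
  have hsplit : ∫ z, H z * e z ∂μ = w * ∫ z, e z ∂μ + ∫ z, (H z - w) * e z ∂μ := by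
    simp_rw [sub_mul]
    rw [integral_sub hHe (he.const_mul w), integral_const_mul, add_sub_cancel]
  have hrest : ‖∫ z, (H z - w) * e z ∂μ‖ ≤ r := by
    simpa using norm_integral_le_of_norm_le_const (hHw.mono fun z hz => by
      rw [norm_mul]
      exact (mul_le_of_le_one_right (norm_nonneg _) (he1 z)).trans hz)
  rw [hsplit]
  exact (norm_add_le _ _).trans (by rw [norm_mul]; gcongr)

end Minorization

section EssOpNorm

variable {α β : Type*} [MeasurableSpace α] [MeasurableSpace β]

lemma essSup_nonneg {μ : Measure α} [NeZero μ] {f : α → ℝ} (hf : 0 ≤ f) : 0 ≤ essSup f μ := by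
  rw [essSup, Filter.limsup_eq]
  refine Real.sInf_nonneg fun c hc => ?_
  obtain ⟨x, hx⟩ := Filter.Eventually.exists (f := ae μ) hc
  exact (hf x).trans hx

noncomputable def essOpNorm (P : Measure α) (F : (β → ℂ) → α → ℂ) : ℝ :=
  sSup {c : ℝ | ∃ h : β → ℂ, Measurable h ∧ (∀ z, ‖h z‖ ≤ 1) ∧ c = essSup (fun x => ‖F h x‖) P}

variable {P : Measure α} [NeZero P] {F : (β → ℂ) → α → ℂ}

lemma essOpNorm_nonneg : 0 ≤ essOpNorm P F := by
  refine Real.sSup_nonneg ?_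
  rintro _ ⟨h, -, -, rfl⟩
  exact essSup_nonneg fun x => norm_nonneg _

lemma essOpNorm_le {M : ℝ} (hM : 0 ≤ M)
    (hF : ∀ h : β → ℂ, Measurable h → (∀ z, ‖h z‖ ≤ 1) → ∀ᵐ x ∂P, ‖F h x‖ ≤ M) :
    essOpNorm P F ≤ M := by
  refine Real.sSup_le ?_ hM
  rintro _ ⟨h, hh, hh1, rfl⟩
  exact essSup_le_of_ae_le M (hF h hh hh1)
    (Filter.isCoboundedUnder_le_of_le _ fun _ => norm_nonneg _)

end EssOpNorm

lemma norm_exp_ofReal_mul_ofReal_mul_I (u v : ℝ) : ‖Complex.exp (u * v * Complex.I)‖ = 1 := by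
  simp [Complex.norm_exp]

lemma norm_mul_exp_ofReal_mul_ofReal_mul_I_le {z : ℂ} (hz : ‖z‖ ≤ 1) (u v : ℝ) :
    ‖z * Complex.exp (u * v * Complex.I)‖ ≤ 1 := by
  rwa [norm_mul, norm_exp_ofReal_mul_ofReal_mul_I, mul_one]

lemma norm_integral_mul_exp_le_one {α : Type*} [MeasurableSpace α] {μ : Measure α}
    [IsProbabilityMeasure μ] {h : α → ℂ} (hh : ∀ y, ‖h y‖ ≤ 1) (g : α → ℝ) (u : ℝ) :
    ‖∫ y, h y * Complex.exp (u * g y * Complex.I) ∂μ‖ ≤ 1 := by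
  simpa using norm_integral_le_of_norm_le_const (μ := μ)
    (.of_forall fun y => norm_mul_exp_ofReal_mul_ofReal_mul_I_le (hh y) u (g y))

namespace ProbabilityTheory.Kernel

variable {α β γ : Type*} [MeasurableSpace α] [MeasurableSpace β] [MeasurableSpace γ]

noncomputable def fourierOp (Q : Kernel α β) (g : β → ℝ) (u : ℝ) (h : β → ℂ) (x : α) : ℂ :=
  ∫ y, h y * Complex.exp (u * g y * Complex.I) ∂(Q x)

variable {Q : Kernel α β} {g : β → ℝ} {u : ℝ} {h : β → ℂ}

lemma measurable_fourierOp (hg : Measurable g) (hh : Measurable h) :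
    Measurable (Q.fourierOp g u h) :=
  (StronglyMeasurable.integral_kernel (by fun_prop)).measurable

lemma norm_fourierOp_le [IsMarkovKernel Q] (hh : ∀ y, ‖h y‖ ≤ 1) (x : α) :
    ‖Q.fourierOp g u h x‖ ≤ 1 :=
  norm_integral_mul_exp_le_one hh g u

theorem norm_fourierOp_fourierOp_le {Q₁ : Kernel α β} {Q₂ : Kernel β γ} [IsMarkovKernel Q₁]
    [IsMarkovKernel Q₂] {P₁ : Measure β} {P₂ : Measure γ} [IsProbabilityMeasure P₁]
    [IsProbabilityMeasure P₂] {a : ℝ} (ha : 0 ≤ a) {x : α}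
    (hQ₁ : ∀ A, MeasurableSet A → a * (P₁ A).toReal ≤ (Q₁ x A).toReal)
    (hQ₂ : ∀ᵐ y ∂P₁, ∀ A, MeasurableSet A → a * (P₂ A).toReal ≤ (Q₂ y A).toReal)
    {g₁ : β → ℝ} {g₂ : γ → ℝ} (hg₁ : Measurable g₁) (hg₂ : Measurable g₂) (u : ℝ)
    {h : γ → ℂ} (hh : Measurable h) (hh1 : ∀ z, ‖h z‖ ≤ 1) :
    ‖Q₁.fourierOp g₁ u (Q₂.fourierOp g₂ u h) x‖ ≤
      a ^ 2 * ‖∫ y, Complex.exp (u * g₁ y * Complex.I) ∂P₁‖ + (1 - a ^ 2) := by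
  set H := Q₂.fourierOp g₂ u h
  set t := ‖∫ y, Complex.exp (u * g₁ y * Complex.I) ∂P₁‖
  set I := ∫ y, H y * Complex.exp (u * g₁ y * Complex.I) ∂P₁
  have hE1 : ∀ y, ‖Complex.exp (u * g₁ y * Complex.I)‖ ≤ 1 := fun y =>
    (norm_exp_ofReal_mul_ofReal_mul_I u (g₁ y)).le
  have hG1 : ∀ y, ‖H y * Complex.exp (u * g₁ y * Complex.I)‖ ≤ 1 := fun y =>
    norm_mul_exp_ofReal_mul_ofReal_mul_I_le (norm_fourierOp_le hh1 y) u (g₁ y)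
  have hHm : Measurable H := measurable_fourierOp hg₂ hh
  have hH : ∀ᵐ y ∂P₁, ‖H y - a * ∫ z, h z * Complex.exp (u * g₂ z * Complex.I) ∂P₂‖ ≤ 1 - a :=
    hQ₂.mono fun y hy => norm_integral_sub_mul_integral_le_one_sub ha hy (by fun_prop)
      fun z => norm_mul_exp_ofReal_mul_ofReal_mul_I_le (hh1 z) u (g₂ z)
  have hI : ‖I‖ ≤ a * t + (1 - a) := by
    refine (norm_integral_mul_le_of_ae_norm_sub_le (.of_bound (by fun_prop) 1 (.of_forall hG1))
      (.of_bound (by fun_prop) 1 (.of_forall hE1)) hE1 hH).trans ?_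
    rw [norm_mul, Complex.norm_real, Real.norm_of_nonneg ha]
    gcongr
    exact mul_le_of_le_one_right ha (norm_integral_mul_exp_le_one hh1 g₂ u)
  calc ‖Q₁.fourierOp g₁ u H x‖ ≤ ‖(a : ℂ) * I‖ + ‖Q₁.fourierOp g₁ u H x - a * I‖ :=
        norm_le_norm_add_norm_sub' _ _
    _ ≤ a * (a * t + (1 - a)) + (1 - a) := by
        rw [norm_mul, Complex.norm_real, Real.norm_of_nonneg ha]
        gcongr
        exact norm_integral_sub_mul_integral_le_one_sub ha hQ₁ (by fun_prop) hG1
    _ = a ^ 2 * t + (1 - a ^ 2) := by ring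

end ProbabilityTheory.Kernel

lemma sq_mul_add_one_sub_le {a b t : ℝ} (ha1 : a ^ 2 ≤ 1) (hb1 : 1 ≤ b) (ht0 : 0 ≤ t)
    (ht1 : t ≤ 1) : (a ^ 2 * t + (1 - a ^ 2)) ^ 2 ≤ 1 - a ^ 4 / b / 2 * (1 - t ^ 2) := by
  have hs : 0 ≤ a ^ 2 * (1 - t) ∧ a ^ 2 * (1 - t) ≤ 1 :=
    ⟨by nlinarith [sq_nonneg a], by nlinarith [sq_nonneg a]⟩
  have hγ : a ^ 4 / b ≤ a ^ 2 := by
    rw [div_le_iff₀ (by linarith)]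
    nlinarith [sq_nonneg a]
  calc (a ^ 2 * t + (1 - a ^ 2)) ^ 2 = (1 - a ^ 2 * (1 - t)) ^ 2 := by ring
    _ ≤ 1 - a ^ 2 * (1 - t) := by nlinarith
    _ ≤ 1 - a ^ 4 / b * (1 - t) := by gcongr
    _ ≤ 1 - a ^ 4 / b / 2 * (1 - t ^ 2) := by
        have : 0 ≤ a ^ 4 / b := by positivity
        nlinarith [mul_nonneg this (sq_nonneg (1 - t))]

/-- `P0, P1, P2` are the marginals at times `k-2, k-1, k`, `Q1, Q2` the transition kernels
from time `k-2` to `k-1` and from `k-1` to `k`, and `g1, g2` the functions `g_{k-1}, g_k`. -/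
theorem operator_composition_norm_bound
    {S : Type*} [MeasurableSpace S]
    (P0 P1 P2 : Measure S) [IsProbabilityMeasure P0] [IsProbabilityMeasure P1]
    [IsProbabilityMeasure P2]
    (Q1 Q2 : ProbabilityTheory.Kernel S S)
    [ProbabilityTheory.IsMarkovKernel Q1] [ProbabilityTheory.IsMarkovKernel Q2]
    (a b : ℝ) (ha : 0 < a) (ha1 : a ≤ 1) (hb1 : 1 ≤ b)
    (S1 : Set S) (hS1meas : MeasurableSet S1) (hS1 : P0 S1 = 1)
    (hdom1 : ∀ x ∈ S1, ∀ A : Set S, MeasurableSet A →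
      a * (P1 A).toReal ≤ (Q1 x A).toReal ∧ (Q1 x A).toReal ≤ b * (P1 A).toReal)
    (S2 : Set S) (hS2meas : MeasurableSet S2) (hS2 : P1 S2 = 1)
    (hdom2 : ∀ y ∈ S2, ∀ A : Set S, MeasurableSet A →
      a * (P2 A).toReal ≤ (Q2 y A).toReal ∧ (Q2 y A).toReal ≤ b * (P2 A).toReal)
    (g1 g2 : S → ℝ) (hg1 : Measurable g1) (hg2 : Measurable g2) (u : ℝ) :
    (sSup {c : ℝ | ∃ h : S → ℂ, Measurable h ∧ (∀ z, ‖h z‖ ≤ 1) ∧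
        c = essSup (fun x => ‖
            (∫ y, (∫ z, h z * Complex.exp (u * g2 z * Complex.I) ∂(Q2 y)) *
              Complex.exp (u * g1 y * Complex.I) ∂(Q1 x))‖) P0}) ^ 2 ≤
      1 - (a ^ 4 / b) / 2 *
        (1 - ‖∫ y, Complex.exp (u * g1 y * Complex.I) ∂P1‖ ^ 2) := by
  set t := ‖∫ y, Complex.exp (u * g1 y * Complex.I) ∂P1‖
  have ht1 : t ≤ 1 := by
    simpa using norm_integral_le_of_norm_le_const (μ := P1)
      (.of_forall fun y => (norm_exp_ofReal_mul_ofReal_mul_I u (g1 y)).le)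
  have ha2 : a ^ 2 ≤ 1 := pow_le_one₀ ha.le ha1
  have hS1ae : ∀ᵐ x ∂P0, x ∈ S1 := (mem_ae_iff_prob_eq_one hS1meas).2 hS1
  have hS2ae : ∀ᵐ y ∂P1, y ∈ S2 := (mem_ae_iff_prob_eq_one hS2meas).2 hS2
  have hQ2 : ∀ᵐ y ∂P1, ∀ A, MeasurableSet A → a * (P2 A).toReal ≤ (Q2 y A).toReal :=
    hS2ae.mono fun y hy A hA => (hdom2 y hy A hA).1
  have hnorm : essOpNorm P0 (fun h => Q1.fourierOp g1 u (Q2.fourierOp g2 u h)) ≤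
      a ^ 2 * t + (1 - a ^ 2) :=
    essOpNorm_le (add_nonneg (by positivity) (sub_nonneg.2 ha2))
      fun h hh hh1 => hS1ae.mono fun x hx => Kernel.norm_fourierOp_fourierOp_le ha.le
        (fun A hA => (hdom1 x hx A hA).1) hQ2 hg1 hg2 u hh hh1
  calc essOpNorm P0 (fun h => Q1.fourierOp g1 u (Q2.fourierOp g2 u h)) ^ 2
      ≤ (a ^ 2 * t + (1 - a ^ 2)) ^ 2 := pow_le_pow_left₀ essOpNorm_nonneg hnorm 2
    _ ≤ _ := sq_mul_add_one_sub_le ha2 hb1 (norm_nonneg _) ht1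
end
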